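/- Fix an even positive integer p and dimension d. Define K(x) = (1, x, x², …, x^p) ∈ ℝ^{p+1}, F(a) = (a^p, −C(p,1)a^{p−1}, …, −C(p,p−1)a, C(p,p)) ∈ ℝ^{p+1} with alternating binomial signs so that ⟨K(x), F(a)⟩ = (a − x)^p, and for y, z ∈ ℝ^d let G(y) = (1/√(pd))·(K(y₁/p), …, K(y_d/p)) and H(z) = (1/√(pd))·(F(z₁/p), …, F(z_d/p)). Then ⟨G(y), H(z)⟩ = (1/(pd))·‖(y−z)/p‖_p^p. -/

import Mathlib

open scoped RealInnerProductSpace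

noncomputable def Gmap (p d : ℕ) (y : EuclideanSpace ℝ (Fin d)) :
    EuclideanSpace ℝ (Fin d × Fin (p + 1)) :=
  WithLp.toLp 2 (fun ji => (Real.sqrt (p * d))⁻¹ * (y ji.1 / p) ^ (ji.2 : ℕ))

noncomputable def Hmap (p d : ℕ) (z : EuclideanSpace ℝ (Fin d)) :
    EuclideanSpace ℝ (Fin d × Fin (p + 1)) :=
  WithLp.toLp 2 (fun ji => (Real.sqrt (p * d))⁻¹ *
    ((-1 : ℝ) ^ (ji.2 : ℕ) * (p.choose ji.2) * (z ji.1 / p) ^ (p - (ji.2 : ℕ))))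

theorem stmt_14 (p d : ℕ) (hp : Even p) (hp0 : 0 < p) (hd : 0 < d)
    (y z : EuclideanSpace ℝ (Fin d)) :
    ⟪Gmap p d y, Hmap p d z⟫ = (1 / (p * d)) * ∑ j : Fin d, |(y j - z j) / p| ^ p := by
  have hpd : (0 : ℝ) < (p : ℝ) * d := by positivity
  have hsq : ((Real.sqrt (p * d))⁻¹ : ℝ) * (Real.sqrt (p * d))⁻¹ = ((p : ℝ) * d)⁻¹ := by
    rw [← mul_inv, Real.mul_self_sqrt hpd.le]
  rw [EuclideanSpace.inner_eq_star_dotProduct]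
  simp only [dotProduct, Pi.star_apply, star_trivial, Gmap, Hmap, PiLp.toLp_apply]
  rw [Fintype.sum_prod_type]
  have key : ∀ j : Fin d,
      (∑ i : Fin (p + 1), Gmap p d y (j, i) * Hmap p d z (j, i))
        = ((p : ℝ) * d)⁻¹ * |(y j - z j) / p| ^ p := by
    intro j
    have habs : |(y j - z j) / p| ^ p = ((y j - z j) / p) ^ p := hp.pow_abs _
    have hsub : ((y j - z j) / p) = y j / p - z j / p := by ring
    have := sub_pow (y j / p) (z j / p) p
    calc (∑ i : Fin (p + 1), Gmap p d y (j, i) * Hmap p d z (j, i))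
        = ((p : ℝ) * d)⁻¹ * ∑ i : Fin (p + 1),
            (-1 : ℝ) ^ (i : ℕ) * (y j / p) ^ (i : ℕ) * (z j / p) ^ (p - (i : ℕ))
              * (p.choose i) := by
          rw [Finset.mul_sum]
          refine Finset.sum_congr rfl fun i _ => ?_
          simp only [Gmap, Hmap]
          rw [← hsq]; ring
      _ = ((p : ℝ) * d)⁻¹ * ((y j / p) - (z j / p)) ^ p := by
          rw [sub_pow, Fin.sum_univ_eq_sum_range
            (fun m => (-1 : ℝ) ^ m * (y j / p) ^ m * (z j / p) ^ (p - m) * (p.choose m))]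
          congr 1
          refine Finset.sum_congr rfl fun m _ => ?_
          have : (-1 : ℝ) ^ (m + p) = (-1) ^ m := by
            rw [pow_add, hp.neg_one_pow, mul_one]
          rw [this]
      _ = ((p : ℝ) * d)⁻¹ * |(y j - z j) / p| ^ p := by rw [habs, hsub]
  simp only [Gmap, Hmap] at key
  rw [Finset.sum_congr rfl (fun j _ => (Finset.sum_congr rfl fun i _ => mul_comm _ _).trans (key j)), ← Finset.mul_sum, one_div]
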